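/- arXiv:2109.05954 — 4 statements merged into one kernel-verified Lean document; each statement's English description precedes it below -/
import Mathlib

section
/- Let A, E be real n×n matrices such that the pencil A − sE is admissible. Then for every B ∈ ℝ^{n×m}, C ∈ ℝ^{p×n} and D ∈ ℝ^{p×m}, the transfer function matrix C(sE − A)^{−1}B + D (a p×m matrix over the field ℝ(s) of real rational functions) is stable; in particular every entry is proper and all of its poles lie in the open left half-plane. -/
/-!
Let `P(s) = det (sE - A)`. Every entry of `C (sE - A)⁻¹ B + D` is `q / P` with `q` an entry of
the polynomial matrix `C adj(sE - A) B + D P`, so its reduced denominator divides `P`, whose complex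
roots are the finite generalized eigenvalues of the pencil.
For properness, expand `det (sE + A)` by multilinearity in the rows: the coefficient of `s ^ k` is
a sum of determinants having `k` rows taken from `E`, which vanish when `k > rank E`. Each entry of
`adj(sE - A)` is the determinant of a pencil whose `E`-part is `E` with one row set to zero, so it
has degree at most `rank E = deg P`.
-/

open Matrix Polynomial
open scoped Kronecker

set_option synthInstance.maxHeartbeats 400000
set_option maxHeartbeats 1000000

noncomputable section

/-- The field ℝ(s) of real rational functions. -/
abbrev RF := RatFunc ℝ

/-- A rational function is proper if the degree of its numerator (in lowest terms)
is at most the degree of its denominator. -/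
def RFproper (f : RF) : Prop := f.num.degree ≤ f.denom.degree

/-- A rational function is stable: proper and every complex root of its denominator
has strictly negative real part. -/
def RFstable (f : RF) : Prop :=
  RFproper f ∧ ∀ z : ℂ, Polynomial.aeval z f.denom = 0 → z.re < 0

/-- A rational matrix is stable (lies in RH∞) iff every entry is stable. -/
def MStable {p m : Type*} (G : Matrix p m RF) : Prop := ∀ i j, RFstable (G i j)

/-- A real matrix viewed as a matrix over ℝ(s). -/
def toRF {p m : Type*} (M : Matrix p m ℝ) : Matrix p m RF := M.map (algebraMap ℝ RF)

/-- A real matrix viewed as a matrix over ℂ. -/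
def toC {p m : Type*} (M : Matrix p m ℝ) : Matrix p m ℂ := M.map (fun x => (x : ℂ))

/-- The pencil A - s E as a matrix over ℝ(s). -/
def pencilRF {n : Type*} (A E : Matrix n n ℝ) : Matrix n n RF :=
  toRF A - (RatFunc.X : RF) • toRF E

/-- Admissible pencil: regular, every finite generalized eigenvalue in the open left
half-plane, and deg det(sE - A) = rank E (all infinite generalized eigenvalues have
partial multiplicity at most 1). -/
def Admissible {n : Type*} [Fintype n] [DecidableEq n] (A E : Matrix n n ℝ) : Prop :=
  (pencilRF A E).det ≠ 0 ∧
  (∀ z : ℂ, (toC A - z • toC E).det = 0 → z.re < 0) ∧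
  (Matrix.of fun i j => Polynomial.X * Polynomial.C (E i j) - Polynomial.C (A i j)).det.natDegree
    = E.rank

/-- Transfer function matrix C (sE - A)⁻¹ B + D of a descriptor realization. -/
def tfm {n p m : Type*} [Fintype n] [DecidableEq n] (E A : Matrix n n ℝ)
    (B : Matrix n m ℝ) (C : Matrix p n ℝ) (D : Matrix p m ℝ) : Matrix p m RF :=
  toRF C * ((RatFunc.X : RF) • toRF E - toRF A)⁻¹ * toRF B + toRF D

namespace Matrix

theorem natDegree_map_C_mul_mul_map_C_apply_le {R : Type*} [CommSemiring R]
    {p l n m : Type*} [Fintype l] [Fintype n] (C : Matrix p l R) (N : Matrix l n R[X])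
    (B : Matrix n m R) {d : ℕ} (hN : ∀ k k', (N k k').natDegree ≤ d) (i : p) (j : m) :
    ((C.map Polynomial.C * N * B.map Polynomial.C) i j).natDegree ≤ d := by
  simp only [mul_apply, map_apply, Finset.sum_mul]
  refine natDegree_sum_le_of_forall_le _ _ fun k _ =>
    natDegree_sum_le_of_forall_le _ _ fun k' _ => ?_
  rw [mul_assoc]
  exact (natDegree_C_mul_le _ _).trans ((natDegree_mul_C_le _ _).trans (hN k' k))

section PencilDegree

variable {K : Type*} [Field K] {n : Type*} [Fintype n] [DecidableEq n]

theorem det_of_piecewise_eq_zero_of_rank_lt (E A : Matrix n n K) {s : Finset n}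
    (hs : E.rank < s.card) : (of (s.piecewise E A)).det = 0 := by
  by_contra hdet
  have hrows : LinearIndependent K (E.submatrix ((↑) : s → n) id).row := by
    have hrow : (E.submatrix ((↑) : s → n) id).row = of (s.piecewise E A) ∘ (↑) := by
      ext i : 1
      exact (Finset.piecewise_eq_of_mem s E A i.2).symm
    rw [hrow]
    exact (linearIndependent_rows_of_det_ne_zero hdet).comp _ Subtype.val_injective
  have := hrows.rank_matrix.symm.trans_le (E.rank_submatrix_le ((↑) : s → n) id)
  simp only [Fintype.card_coe] at this
  omega

theorem det_X_smul_add_C_eq_sum (E A : Matrix n n K) :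
    ((X : K[X]) • E.map C + A.map C).det =
      ∑ s : Finset n, (X : K[X]) ^ s.card * C (of (s.piecewise E A)).det := by
  refine ((detRowAlternating (R := K[X])).map_add_univ _ _).trans
    (Finset.sum_congr rfl fun s _ => ?_)
  set m : Matrix n n K[X] := (of (s.piecewise E A)).map C with hm
  calc detRowAlternating (s.piecewise ((X : K[X]) • E.map C) (A.map C))
      = detRowAlternating (s.piecewise (fun i => (X : K[X]) • m i) m) := by
        congr 1
        funext i j
        simp only [Finset.piecewise, hm]
        split_ifs with hi <;> simp [Finset.piecewise, hi]
    _ = (∏ _i ∈ s, (X : K[X])) • detRowAlternating m :=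
        detRowAlternating.toMultilinearMap.map_piecewise_smul _ m s
    _ = _ := by rw [Finset.prod_const, smul_eq_mul, hm, RingHom.map_det]; rfl

theorem natDegree_det_X_smul_add_C_le_rank (E A : Matrix n n K) :
    ((X : K[X]) • E.map C + A.map C).det.natDegree ≤ E.rank := by
  rw [det_X_smul_add_C_eq_sum]
  refine natDegree_sum_le_of_forall_le _ _ fun s _ => ?_
  rcases lt_or_ge E.rank s.card with hs | hs
  · simp [det_of_piecewise_eq_zero_of_rank_lt E A hs]
  · exact (natDegree_mul_C_le _ _).trans ((natDegree_X_pow_le _).trans hs)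

theorem rank_updateRow_zero_le (E : Matrix n n K) (k : n) : (E.updateRow k 0).rank ≤ E.rank := by
  have : E.updateRow k 0 = diagonal (Function.update 1 k 0) * E := by
    ext i j
    rcases eq_or_ne i k with rfl | hi <;> simp [updateRow_apply, *]
  rw [this]
  exact rank_mul_le_right _ _

theorem natDegree_adjugate_X_smul_add_C_le_rank (E A : Matrix n n K) (i j : n) :
    (((X : K[X]) • E.map C + A.map C).adjugate i j).natDegree ≤ E.rank := by
  have : ((X : K[X]) • E.map C + A.map C).updateRow j (Pi.single i 1) =
      (X : K[X]) • (E.updateRow j 0).map C + (A.updateRow j (Pi.single i 1)).map C := by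
    ext k l : 1
    rcases eq_or_ne k j with rfl | hk
    · simp [Pi.single_apply, apply_ite C]
    · simp [updateRow_ne hk]
  rw [adjugate_apply, this]
  exact (natDegree_det_X_smul_add_C_le_rank _ _).trans (rank_updateRow_zero_le E j)

end PencilDegree

end Matrix

theorem rfProper_iff_intDegree_nonpos (f : RF) : RFproper f ↔ f.intDegree ≤ 0 := by
  rcases eq_or_ne f 0 with rfl | hf
  · simp [RFproper]
  · rw [RFproper, RatFunc.intDegree, degree_eq_natDegree (RatFunc.num_ne_zero hf),
      degree_eq_natDegree f.denom_ne_zero, Nat.cast_le]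
    omega

theorem rfStable_div {p q : ℝ[X]} (hq : q ≠ 0) (hpq : p.natDegree ≤ q.natDegree)
    (hroots : ∀ z : ℂ, aeval z q = 0 → z.re < 0) :
    RFstable (algebraMap ℝ[X] RF p / algebraMap ℝ[X] RF q) := by
  refine ⟨?_, fun z hz => hroots z ?_⟩
  · rw [rfProper_iff_intDegree_nonpos]
    rcases eq_or_ne p 0 with rfl | hp
    · simp
    rw [RatFunc.intDegree_div (RatFunc.algebraMap_ne_zero hp) (RatFunc.algebraMap_ne_zero hq),
      RatFunc.intDegree_polynomial, RatFunc.intDegree_polynomial]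
    omega
  · obtain ⟨r, hr⟩ := RatFunc.denom_div_dvd p q
    rw [hr, map_mul, hz, zero_mul]

theorem toRF_eq_map_map_C {p m : Type*} (M : Matrix p m ℝ) :
    toRF M = (M.map Polynomial.C).map (algebraMap ℝ[X] RF) := by
  ext i j
  simp [toRF, RatFunc.algebraMap_C, RatFunc.algebraMap_eq_C]

theorem map_algebraMap_X_smul_add_C {n : Type*} (E A : Matrix n n ℝ) :
    ((X : ℝ[X]) • E.map Polynomial.C + A.map Polynomial.C).map (algebraMap ℝ[X] RF) =
      (RatFunc.X : RF) • toRF E + toRF A := by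
  ext i j
  simp [toRF, RatFunc.algebraMap_C, RatFunc.algebraMap_eq_C]
  exact mul_comm _ _

theorem map_aeval_X_smul_add_C {n : Type*} (E A : Matrix n n ℝ) (z : ℂ) :
    ((X : ℝ[X]) • E.map Polynomial.C + A.map Polynomial.C).map (aeval z) = z • toC E + toC A := by
  ext i j
  simp [toC]
  exact mul_comm _ _

theorem toRF_mul_inv_mul_add_toRF_apply {n p m : Type*} [Fintype n] [DecidableEq n]
    (M : Matrix n n ℝ[X]) (hM : M.det ≠ 0) (B : Matrix n m ℝ) (C : Matrix p n ℝ)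
    (D : Matrix p m ℝ) (i : p) (j : m) :
    (toRF C * (M.map (algebraMap ℝ[X] RF))⁻¹ * toRF B + toRF D) i j =
      algebraMap ℝ[X] RF ((C.map Polynomial.C * M.adjugate * B.map Polynomial.C) i j +
        Polynomial.C (D i j) * M.det) / algebraMap ℝ[X] RF M.det := by
  have hdet : algebraMap ℝ[X] RF M.det ≠ 0 := RatFunc.algebraMap_ne_zero hM
  rw [Matrix.inv_def, Ring.inverse_eq_inv, ← RingHom.mapMatrix_apply, ← RingHom.map_det,
    ← RingHom.map_adjugate, RingHom.mapMatrix_apply, toRF_eq_map_map_C C, toRF_eq_map_map_C B,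
    toRF_eq_map_map_C D, Matrix.mul_smul, Matrix.smul_mul, ← Matrix.map_mul, ← Matrix.map_mul]
  simp only [Matrix.add_apply, Matrix.smul_apply, Matrix.map_apply, smul_eq_mul, map_add, map_mul]
  field_simp

theorem mStable_toRF_mul_inv_mul_add_toRF {n p m : Type*} [Fintype n] [DecidableEq n]
    (M : Matrix n n ℝ[X]) (hM : M.det ≠ 0)
    (hadj : ∀ k l, (M.adjugate k l).natDegree ≤ M.det.natDegree)
    (hroots : ∀ z : ℂ, aeval z M.det = 0 → z.re < 0)
    (B : Matrix n m ℝ) (C : Matrix p n ℝ) (D : Matrix p m ℝ) :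
    MStable (toRF C * (M.map (algebraMap ℝ[X] RF))⁻¹ * toRF B + toRF D) := by
  intro i j
  rw [toRF_mul_inv_mul_add_toRF_apply M hM]
  refine rfStable_div hM ((natDegree_add_le _ _).trans (max_le ?_ ?_)) hroots
  · exact natDegree_map_C_mul_mul_map_C_apply_le C _ B hadj i j
  · exact natDegree_C_mul_le _ _

/-- if the pencil A - sE is admissible then the transfer function matrix
C (sE - A)⁻¹ B + D is stable: every entry is proper and all of its poles lie in the
open left half-plane. -/
theorem stmt_0 {n m p : ℕ} (A E : Matrix (Fin n) (Fin n) ℝ) (hAE : Admissible A E)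
    (B : Matrix (Fin n) (Fin m) ℝ) (C : Matrix (Fin p) (Fin n) ℝ)
    (D : Matrix (Fin p) (Fin m) ℝ) :
    MStable (tfm E A B C D) := by
  obtain ⟨hregular, hfinite, hdegree⟩ := hAE
  set M : Matrix (Fin n) (Fin n) ℝ[X] :=
    (X : ℝ[X]) • E.map Polynomial.C + (-A).map Polynomial.C with hM
  have hM_RF : M.map (algebraMap ℝ[X] RF) = (RatFunc.X : RF) • toRF E - toRF A := by
    rw [map_algebraMap_X_smul_add_C, sub_eq_add_neg]
    exact congrArg _ (A.map_neg _ (map_neg _))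
  have hdet : M.det ≠ 0 := fun h => hregular <| by
    rw [pencilRF, ← neg_sub, ← hM_RF, det_neg, ← RingHom.mapMatrix_apply, ← RingHom.map_det, h,
      map_zero, mul_zero]
  have hroots (z : ℂ) (hz : aeval z M.det = 0) : z.re < 0 := hfinite z <| by
    have hneg : toC (-A) = -toC A := A.map_neg _ Complex.ofReal_neg
    rw [AlgHom.map_det, AlgHom.mapMatrix_apply, map_aeval_X_smul_add_C, hneg,
      ← sub_eq_add_neg] at hz
    rw [← neg_sub, det_neg]
    exact mul_eq_zero_of_right _ hz
  have hadj (k l : Fin n) : (M.adjugate k l).natDegree ≤ M.det.natDegree := by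
    have hM_of : Matrix.of (fun i j => X * Polynomial.C (E i j) - Polynomial.C (A i j)) = M := by
      ext i j : 1
      simp [hM, sub_eq_add_neg]
    rw [← hM_of, hdegree, hM_of]
    exact natDegree_adjugate_X_smul_add_C_le_rank E (-A) k l
  rw [tfm, ← hM_RF]
  exact mStable_toRF_mul_inv_mul_add_toRF M hdet hadj hroots B C D

end
end

section
/- Let E, A ∈ ℝ^{n×n} with A − sE regular, B₂ ∈ ℝ^{n×m}, C₂ ∈ ℝ^{p×n}, D₂₂ ∈ ℝ^{p×m}, and let G₂₂ := C₂(sE − A)^{−1}B₂ + D₂₂ ∈ ℝ(s)^{p×m}. Suppose F ∈ ℝ^{m×n} and H ∈ ℝ^{n×p} are such that the pencils A_F − sE := A + B₂F − sE and A_H − sE := A + HC₂ − sE are both admissible. Define the eight rational matrices: Ỹ := F(sE − A_H)^{−1}(−B₂ − HD₂₂) + I_m, X̃ := −F(sE − A_H)^{−1}H, Ñ := C₂(sE − A_H)^{−1}(B₂ + HD₂₂) + D₂₂, M̃ := C₂(sE − A_H)^{−1}H + I_p, M := F(sE − A_F)^{−1}B₂ + I_m, X := −F(sE − A_F)^{−1}H,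 N := (C₂ + D₂₂F)(sE − A_F)^{−1}B₂ + D₂₂, Y := −(C₂ + D₂₂F)(sE − A_F)^{−1}H + I_p. Then (N, Ñ, M, M̃, X, X̃, Y, Ỹ) is a doubly coprime factorization of G₂₂ over RH∞: all eight matrices are stable, det M ≢ 0, det M̃ ≢ 0, G₂₂ = N M^{−1} = M̃^{−1} Ñ, and the Bézout identity [[Ỹ, −X̃],[−Ñ, M̃]]·[[M, X],[N, Y]] = I_{m+p} holds. -/
/-!
Stability. By the Schur complement, the `(i, j)` entry of `C (sE - A)⁻¹ B + D` is
`det [[sE - A, B_j], [-C_i, D_ij]] / det (sE - A)`. The bordered pencil has leading matrix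
`diag(E, 0)`; factoring `E = U V` through `Fin (rank E)` and taking a Schur complement the other
way shows that its determinant has degree at most `rank E`. For an admissible pencil this is the
degree of `det (sE - A)`, whose roots lie in the open left half-plane, so the entry is stable.

Algebra. With `S = sE - A`, `S_F = S - B₂ F` and `S_H = S - H C₂` one has
`M⁻¹ = I - F S⁻¹ B₂` and `M̃⁻¹ = I - C₂ S⁻¹ H`; the factorizations and the Bézout identity are
then polynomial identities in `S⁻¹, S_F⁻¹, S_H⁻¹`, closed by replacing `B₂ F` with `S - S_F` and
`H C₂` with `S - S_H`.
-/

open Matrix Polynomial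
open scoped Kronecker

set_option synthInstance.maxHeartbeats 400000
set_option maxHeartbeats 1000000

noncomputable section

/-- (N, Ñ, M, M̃, X, X̃, Y, Ỹ) is a doubly coprime factorization of G over RH∞. -/
def IsDCF {p m : Type*} [Fintype p] [Fintype m] [DecidableEq p] [DecidableEq m]
    (G : Matrix p m RF)
    (N : Matrix p m RF) (Ntil : Matrix p m RF)
    (M : Matrix m m RF) (Mtil : Matrix p p RF)
    (X : Matrix m p RF) (Xtil : Matrix m p RF)
    (Y : Matrix p p RF) (Ytil : Matrix m m RF) : Prop :=
  MStable N ∧ MStable Ntil ∧ MStable M ∧ MStable Mtil ∧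
  MStable X ∧ MStable Xtil ∧ MStable Y ∧ MStable Ytil ∧
  M.det ≠ 0 ∧ Mtil.det ≠ 0 ∧ G = N * M⁻¹ ∧ G = Mtil⁻¹ * Ntil ∧
  Matrix.fromBlocks Ytil (-Xtil) (-Ntil) Mtil * Matrix.fromBlocks M X N Y = 1

lemma Polynomial.natDegree_det_le_sum {R ι : Type*} [CommRing R] [Fintype ι] [DecidableEq ι]
    (M : Matrix ι ι R[X]) (d : ι → ℕ) (hd : ∀ i j, (M i j).natDegree ≤ d i) :
    M.det.natDegree ≤ ∑ i, d i := by
  rw [Matrix.det_apply']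
  refine natDegree_sum_le_of_forall_le _ _ fun σ _ => ?_
  calc (((Equiv.Perm.sign σ : ℤ) : R[X]) * ∏ i, M (σ i) i).natDegree
      ≤ ∑ i, (M (σ i) i).natDegree := by
        refine natDegree_mul_le.trans ?_
        rw [natDegree_intCast, zero_add]
        exact natDegree_prod_le _ _
    _ ≤ ∑ i, d (σ i) := Finset.sum_le_sum fun i _ => hd (σ i) i
    _ = ∑ i, d i := Equiv.sum_comp σ d

lemma Matrix.exists_mul_eq_of_rank {K m n : Type*} [Field K] [Fintype n]
    (E : Matrix m n K) :
    ∃ (U : Matrix m (Fin E.rank) K) (V : Matrix (Fin E.rank) n K), U * V = E := by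
  classical
  let b := Module.finBasisOfFinrankEq K (LinearMap.range E.mulVecLin) rfl
  have hcol : ∀ j, (fun i => E i j) ∈ LinearMap.range E.mulVecLin := fun j =>
    ⟨Pi.single j 1, by ext i; simp [Matrix.mulVec_single]⟩
  refine ⟨Matrix.of fun i k => (b k : m → K) i, Matrix.of fun k j => b.repr ⟨_, hcol j⟩ k, ?_⟩
  ext i j
  have := congrArg (fun w : LinearMap.range E.mulVecLin => (w : m → K) i) (b.sum_repr ⟨_, hcol j⟩)
  simp only [Submodule.coe_sum, Submodule.coe_smul, Finset.sum_apply, Pi.smul_apply,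
    smul_eq_mul] at this
  rw [Matrix.mul_apply, ← this]
  exact Finset.sum_congr rfl fun k _ => mul_comm _ _

/-- `sE - A` over `K[X]`, written exactly as in the degree condition of `Admissible`. -/
def pencilPoly {K n : Type*} [CommRing K] (E A : Matrix n n K) : Matrix n n K[X] :=
  Matrix.of fun i j => X * C (E i j) - C (A i j)

lemma pencilPoly_eq_smul_sub {K n : Type*} [CommRing K] (E A : Matrix n n K) :
    pencilPoly E A = (X : K[X]) • E.map C - A.map C := by
  ext i j : 1
  simp [pencilPoly]

lemma natDegree_det_pencilPoly_mul_le {K n r : Type*} [CommRing K] [Fintype n] [DecidableEq n]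
    [Fintype r] [DecidableEq r] (U : Matrix n r K) (V : Matrix r n K) (A : Matrix n n K) :
    (pencilPoly (U * V) A).det.natDegree ≤ Fintype.card r := by
  have hschur : pencilPoly (U * V) A = -A.map C - -U.map C * ((X : K[X]) • V.map C) := by
    rw [pencilPoly_eq_smul_sub, Matrix.map_mul, Matrix.neg_mul, Matrix.mul_smul]
    abel
  rw [hschur, ← Matrix.det_fromBlocks_one₁₁]
  refine (natDegree_det_le_sum _ (Sum.elim (fun _ => 1) (fun _ => 0)) ?_).trans (by simp)
  rintro (k | i) (l | j)
  · simp only [Matrix.fromBlocks_apply₁₁, Sum.elim_inl, Matrix.one_apply]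
    split <;> simp
  · simpa using (natDegree_mul_C_le X (V k j)).trans natDegree_X_le
  all_goals simp

lemma natDegree_det_pencilPoly_fromBlocks_le_rank {K n u : Type*} [Field K] [Fintype n]
    [DecidableEq n] [Fintype u] [DecidableEq u] (E A : Matrix n n K) (B : Matrix n u K)
    (C : Matrix u n K) (D : Matrix u u K) :
    (pencilPoly (Matrix.fromBlocks E 0 0 0) (Matrix.fromBlocks A B C D)).det.natDegree
      ≤ E.rank := by
  obtain ⟨U, V, hUV⟩ := E.exists_mul_eq_of_rank
  have hblock : Matrix.fromBlocks E 0 0 0 =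
      Matrix.fromRows U (0 : Matrix u _ K) * Matrix.fromCols V (0 : Matrix _ u K) := by
    rw [Matrix.fromRows_mul_fromCols, hUV]
    simp
  have := natDegree_det_pencilPoly_mul_le (Matrix.fromRows U (0 : Matrix u _ K))
    (Matrix.fromCols V (0 : Matrix _ u K)) (Matrix.fromBlocks A B C D)
  rwa [← hblock, Fintype.card_fin] at this

lemma RFstable_div {q p : ℝ[X]} (hp : p ≠ 0) (hqp : q.natDegree ≤ p.natDegree)
    (hroots : ∀ z : ℂ, aeval z p = 0 → z.re < 0) :
    RFstable (algebraMap ℝ[X] RF q / algebraMap ℝ[X] RF p) := by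
  refine ⟨?_, fun z hz => hroots z ?_⟩
  · rcases eq_or_ne q 0 with rfl | hq
    · simp [RFproper]
    set f := algebraMap ℝ[X] RF q / algebraMap ℝ[X] RF p
    have hf : f ≠ 0 := div_ne_zero (RatFunc.algebraMap_ne_zero hq) (RatFunc.algebraMap_ne_zero hp)
    have hdeg : f.intDegree = q.natDegree - p.natDegree := by
      rw [RatFunc.intDegree_div (RatFunc.algebraMap_ne_zero hq) (RatFunc.algebraMap_ne_zero hp),
        RatFunc.intDegree_polynomial, RatFunc.intDegree_polynomial]
    rw [RatFunc.intDegree] at hdeg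
    rw [RFproper, degree_eq_natDegree (RatFunc.num_ne_zero hf),
      degree_eq_natDegree f.denom_ne_zero, Nat.cast_le]
    omega
  · obtain ⟨t, ht⟩ := RatFunc.denom_div_dvd q p
    rw [ht, map_mul, hz, zero_mul]

lemma map_pencilPoly {n : Type*} (E A : Matrix n n ℝ) :
    (pencilPoly E A).map (algebraMap ℝ[X] RF) = (RatFunc.X : RF) • toRF E - toRF A := by
  ext i j
  simp only [pencilPoly, toRF, Matrix.map_apply, Matrix.of_apply, Matrix.sub_apply,
    Matrix.smul_apply, smul_eq_mul, map_sub, map_mul, RatFunc.algebraMap_X, RatFunc.algebraMap_C,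
    RatFunc.algebraMap_eq_C]

lemma tfm_submatrix {n p m p' m' : Type*} [Fintype n] [DecidableEq n] (E A : Matrix n n ℝ)
    (B : Matrix n m ℝ) (C : Matrix p n ℝ) (D : Matrix p m ℝ) (ep : p' → p) (em : m' → m) :
    tfm E A (B.submatrix id em) (C.submatrix ep id) (D.submatrix ep em)
      = (tfm E A B C D).submatrix ep em := by
  ext i j
  simp [tfm, toRF, Matrix.mul_apply]

lemma algebraMap_det_pencilPoly_fromBlocks {n u : Type*} [Fintype n] [DecidableEq n] [Fintype u]
    [DecidableEq u] (E A : Matrix n n ℝ) (B : Matrix n u ℝ) (C : Matrix u n ℝ) (D : Matrix u u ℝ)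
    (hdet : (pencilPoly E A).det ≠ 0) :
    algebraMap ℝ[X] RF
        (pencilPoly (Matrix.fromBlocks E 0 0 0) (Matrix.fromBlocks A (-B) C (-D))).det
      = algebraMap ℝ[X] RF (pencilPoly E A).det * (tfm E A B C D).det := by
  have hblock : (pencilPoly (Matrix.fromBlocks E 0 0 0) (Matrix.fromBlocks A (-B) C (-D))).map
      (algebraMap ℝ[X] RF) = Matrix.fromBlocks ((RatFunc.X : RF) • toRF E - toRF A) (toRF B)
        (-toRF C) (toRF D) := by
    rw [← map_pencilPoly]
    ext (i | i) (j | j) <;> simp [pencilPoly, toRF]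
  have hunit : IsUnit ((RatFunc.X : RF) • toRF E - toRF A).det := by
    rw [← map_pencilPoly, ← RingHom.mapMatrix_apply, ← RingHom.map_det]
    exact (RatFunc.algebraMap_ne_zero hdet).isUnit
  let := ((RatFunc.X : RF) • toRF E - toRF A).invertibleOfIsUnitDet hunit
  rw [RingHom.map_det, RingHom.map_det, RingHom.mapMatrix_apply, RingHom.mapMatrix_apply, hblock,
    map_pencilPoly, Matrix.det_fromBlocks₁₁, Matrix.invOf_eq_nonsing_inv, tfm,
    Matrix.neg_mul, Matrix.neg_mul, sub_neg_eq_add, add_comm]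

lemma Admissible.det_pencilPoly_ne_zero {n : Type*} [Fintype n] [DecidableEq n]
    {E A : Matrix n n ℝ} (hadm : Admissible A E) : (pencilPoly E A).det ≠ 0 := by
  intro h
  apply hadm.1
  rw [pencilRF, ← neg_sub, ← map_pencilPoly, Matrix.det_neg, ← RingHom.mapMatrix_apply,
    ← RingHom.map_det, h, map_zero, mul_zero]

lemma Admissible.re_lt_zero_of_aeval_det_pencilPoly {n : Type*} [Fintype n] [DecidableEq n]
    {E A : Matrix n n ℝ} (hadm : Admissible A E) {z : ℂ}
    (hz : aeval z (pencilPoly E A).det = 0) : z.re < 0 := by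
  apply hadm.2.1
  have hmap : (pencilPoly E A).map (aeval z) = z • toC E - toC A := by
    ext i j
    simp only [pencilPoly, toC, Matrix.map_apply, Matrix.of_apply, Matrix.sub_apply,
      Matrix.smul_apply, smul_eq_mul, aeval_sub, map_mul, aeval_X, aeval_C,
      Complex.coe_algebraMap]
  rw [← neg_sub, Matrix.det_neg, ← hmap, ← AlgHom.mapMatrix_apply, ← AlgHom.map_det, hz,
    mul_zero]

lemma MStable_tfm {n p m : Type*} [Fintype n] [DecidableEq n] {E A : Matrix n n ℝ}
    (hadm : Admissible A E) (B : Matrix n m ℝ) (C : Matrix p n ℝ) (D : Matrix p m ℝ) :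
    MStable (tfm E A B C D) := by
  have hdet := hadm.det_pencilPoly_ne_zero
  intro i j
  set Bj := B.submatrix id fun _ : Unit => j
  set Ci := C.submatrix (fun _ : Unit => i) id
  set Dij := D.submatrix (fun _ : Unit => i) fun _ : Unit => j
  have hentry : tfm E A B C D i j = (tfm E A Bj Ci Dij).det := by
    rw [Matrix.det_unique, tfm_submatrix]
    rfl
  rw [hentry, eq_div_of_mul_eq (RatFunc.algebraMap_ne_zero hdet)
    ((mul_comm _ _).trans (algebraMap_det_pencilPoly_fromBlocks E A Bj Ci Dij hdet).symm)]
  exact RFstable_div hdet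
    ((natDegree_det_pencilPoly_fromBlocks_le_rank E A (-Bj) Ci (-Dij)).trans hadm.2.2.ge)
    fun _ => hadm.re_lt_zero_of_aeval_det_pencilPoly

section toRF

variable {l m p : Type*}

lemma toRF_add (M N : Matrix p m ℝ) : toRF (M + N) = toRF M + toRF N :=
  Matrix.map_add _ (map_add _) M N

lemma toRF_neg (M : Matrix p m ℝ) : toRF (-M) = -toRF M :=
  Matrix.map_neg _ (map_neg _) M

lemma toRF_zero : toRF (0 : Matrix p m ℝ) = 0 :=
  Matrix.map_zero _ (map_zero _)

lemma toRF_mul [Fintype m] (M : Matrix p m ℝ) (N : Matrix m l ℝ) :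
    toRF (M * N) = toRF M * toRF N :=
  Matrix.map_mul

lemma toRF_one [DecidableEq m] : toRF (1 : Matrix m m ℝ) = 1 :=
  Matrix.map_one _ (map_zero _) (map_one _)

end toRF

lemma mul_mul_eq_sub_mul_of_mul_eq {K n m k : Type*} [CommRing K] [Fintype n] [Fintype m]
    {S S' : Matrix n n K} {b : Matrix n m K} {f : Matrix m n K} (hbf : b * f = S - S')
    (x : Matrix n k K) :
    b * (f * x) = S * x - S' * x := by
  rw [← Matrix.mul_assoc, hbf, Matrix.sub_mul]

/-- Writing `S = sE - A`, `S_F = S - b f` and `S_H = S - h c`, these are the identities behind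
`M⁻¹ = 1 - f S⁻¹ b`, `M̃⁻¹ = 1 - c S⁻¹ h`, `G = N M⁻¹ = M̃⁻¹ Ñ` and the Bézout identity; each
follows by eliminating every product `b f`, `h c` in favour of `S - S_F`, `S - S_H`. -/
lemma coprime_factorization_identities {K n m p : Type*} [CommRing K] [Fintype n]
    [DecidableEq n] [Fintype m] [DecidableEq m] [Fintype p] [DecidableEq p]
    {S SF SH : Matrix n n K} {b : Matrix n m K} {c : Matrix p n K} (d : Matrix p m K)
    {f : Matrix m n K} {h : Matrix n p K}
    (hbf : b * f = S - SF) (hhc : h * c = S - SH)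
    (hS : IsUnit S.det) (hSF : IsUnit SF.det) (hSH : IsUnit SH.det) :
    (f * SF⁻¹ * b + 1) * (1 - f * S⁻¹ * b) = 1 ∧
    (c * SH⁻¹ * h + 1) * (1 - c * S⁻¹ * h) = 1 ∧
    c * S⁻¹ * b + d = ((c + d * f) * SF⁻¹ * b + d) * (1 - f * S⁻¹ * b) ∧
    c * S⁻¹ * b + d = (1 - c * S⁻¹ * h) * (c * SH⁻¹ * (b + h * d) + d) ∧
    Matrix.fromBlocks (f * SH⁻¹ * -(b + h * d) + 1) (-(-f * SH⁻¹ * h))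
        (-(c * SH⁻¹ * (b + h * d) + d)) (c * SH⁻¹ * h + 1) *
      Matrix.fromBlocks (f * SF⁻¹ * b + 1) (-f * SF⁻¹ * h)
        ((c + d * f) * SF⁻¹ * b + d) (-(c + d * f) * SF⁻¹ * h + 1) = 1 := by
  rw [Matrix.fromBlocks_multiply, ← Matrix.fromBlocks_one]
  refine ⟨?_, ?_, ?_, ?_, ?_⟩
  on_goal 5 => congr 1
  all_goals
    simp only [Matrix.mul_add, Matrix.add_mul, Matrix.mul_sub, Matrix.sub_mul, Matrix.mul_assoc,
      Matrix.mul_one, Matrix.one_mul, Matrix.mul_neg, Matrix.neg_mul,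
      mul_mul_eq_sub_mul_of_mul_eq hbf, mul_mul_eq_sub_mul_of_mul_eq hhc,
      Matrix.mul_nonsing_inv_cancel_left _ _ hS, Matrix.nonsing_inv_mul_cancel_left _ _ hS,
      Matrix.mul_nonsing_inv_cancel_left _ _ hSF, Matrix.nonsing_inv_mul_cancel_left _ _ hSF,
      Matrix.mul_nonsing_inv_cancel_left _ _ hSH, Matrix.nonsing_inv_mul_cancel_left _ _ hSH]
    try abel

lemma isUnit_det_of_pencilRF {n : Type*} [Fintype n] [DecidableEq n] {A E : Matrix n n ℝ}
    (h : (pencilRF A E).det ≠ 0) : IsUnit ((RatFunc.X : RF) • toRF E - toRF A).det := by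
  rw [pencilRF, ← neg_sub, Matrix.det_neg] at h
  exact (right_ne_zero_of_mul h).isUnit

/-- the state-feedback / output-injection formulas yield a doubly coprime
factorization over RH∞ of G₂₂ = C₂(sE - A)⁻¹B₂ + D₂₂, provided the pencils
A + B₂F - sE and A + HC₂ - sE are admissible. -/
theorem stmt_1 {n m p : ℕ} (E A : Matrix (Fin n) (Fin n) ℝ)
    (hreg : (pencilRF A E).det ≠ 0)
    (B₂ : Matrix (Fin n) (Fin m) ℝ) (C₂ : Matrix (Fin p) (Fin n) ℝ)
    (D₂₂ : Matrix (Fin p) (Fin m) ℝ)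
    (F : Matrix (Fin m) (Fin n) ℝ) (H : Matrix (Fin n) (Fin p) ℝ)
    (hF : Admissible (A + B₂ * F) E) (hH : Admissible (A + H * C₂) E) :
    IsDCF (tfm E A B₂ C₂ D₂₂)
      -- N  := (C₂ + D₂₂F)(sE - A_F)⁻¹B₂ + D₂₂
      (tfm E (A + B₂ * F) B₂ (C₂ + D₂₂ * F) D₂₂)
      -- Ñ  := C₂(sE - A_H)⁻¹(B₂ + HD₂₂) + D₂₂
      (tfm E (A + H * C₂) (B₂ + H * D₂₂) C₂ D₂₂)
      -- M  := F(sE - A_F)⁻¹B₂ + I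
      (tfm E (A + B₂ * F) B₂ F 1)
      -- M̃  := C₂(sE - A_H)⁻¹H + I
      (tfm E (A + H * C₂) H C₂ 1)
      -- X  := -F(sE - A_F)⁻¹H
      (tfm E (A + B₂ * F) H (-F) 0)
      -- X̃  := -F(sE - A_H)⁻¹H
      (tfm E (A + H * C₂) H (-F) 0)
      -- Y  := -(C₂ + D₂₂F)(sE - A_F)⁻¹H + I
      (tfm E (A + B₂ * F) H (-(C₂ + D₂₂ * F)) 1)
      -- Ỹ  := F(sE - A_H)⁻¹(-B₂ - HD₂₂) + I
      (tfm E (A + H * C₂) (-(B₂ + H * D₂₂)) F 1) := by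
  have hSF := isUnit_det_of_pencilRF hF.1
  have hSH := isUnit_det_of_pencilRF hH.1
  simp only [toRF_add, toRF_mul, sub_add_eq_sub_sub] at hSF hSH
  obtain ⟨hM, hMt, hN, hNt, hbez⟩ := coprime_factorization_identities (toRF D₂₂)
    (sub_sub_cancel _ _).symm (sub_sub_cancel _ _).symm (isUnit_det_of_pencilRF hreg) hSF hSH
  refine ⟨MStable_tfm hF _ _ _, MStable_tfm hH _ _ _, MStable_tfm hF _ _ _, MStable_tfm hH _ _ _,
    MStable_tfm hF _ _ _, MStable_tfm hH _ _ _, MStable_tfm hF _ _ _, MStable_tfm hH _ _ _,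
    ?_, ?_, ?_, ?_, ?_⟩ <;>
  simp only [tfm, toRF_add, sub_add_eq_sub_sub, toRF_mul, toRF_neg, toRF_one, toRF_zero,
    add_zero]
  · exact (Matrix.isUnit_det_of_right_inverse hM).ne_zero
  · exact (Matrix.isUnit_det_of_right_inverse hMt).ne_zero
  · rwa [Matrix.inv_eq_right_inv hM]
  · rwa [Matrix.inv_eq_right_inv hMt]
  · exact hbez

end
end

section
/- Let Gⁿ ∈ ℝ(s)^{(p_u+p)×(m_u+m)} be partitioned into blocks G₁₁ ∈ ℝ(s)^{p_u×m_u}, G₁₂ ∈ ℝ(s)^{p_u×m}, G₂₁ ∈ ℝ(s)^{p×m_u}, G₂₂ ∈ ℝ(s)^{p×m}, and let (N, Ñ, M, M̃, X, X̃, Y, Ỹ) be a doubly coprime factorization of G₂₂ over RH∞. Let Q ∈ ℝ(s)^{m×p} be stable with det(Y + NQ) ≢ 0, and set K := (X + MQ)(Y + NQ)^{−1}. Then det(I_p − G₂₂K) ≢ 0 and the closed-loop transfer matrix satisfies G₁₁ + G₁₂ K (I_p − G₂₂K)^{−1} G₂₁ = T₁ + T₂ Q T₃, where T₁ := G₁₁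 + G₁₂ X M̃ G₂₁, T₂ := G₁₂ M, and T₃ := M̃ G₂₁; in particular the closed-loop transfer matrix is an affine function of Q. -/
open Matrix Polynomial
open scoped Kronecker

set_option synthInstance.maxHeartbeats 400000
set_option maxHeartbeats 1000000

noncomputable section

/-- for a Youla-parametrized controller K = (X + MQ)(Y + NQ)⁻¹, the
closed loop is well-posed and the closed-loop transfer matrix
G₁₁ + G₁₂K(I - G₂₂K)⁻¹G₂₁ equals T₁ + T₂ Q T₃, an affine function of Q. -/
theorem stmt_3 {pu mu p m : ℕ}
    (G₁₁ : Matrix (Fin pu) (Fin mu) RF) (G₁₂ : Matrix (Fin pu) (Fin m) RF)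
    (G₂₁ : Matrix (Fin p) (Fin mu) RF) (G₂₂ : Matrix (Fin p) (Fin m) RF)
    (N Ntil : Matrix (Fin p) (Fin m) RF) (M Ytil : Matrix (Fin m) (Fin m) RF)
    (Mtil Y : Matrix (Fin p) (Fin p) RF) (X Xtil : Matrix (Fin m) (Fin p) RF)
    (hDCF : IsDCF G₂₂ N Ntil M Mtil X Xtil Y Ytil)
    (Q : Matrix (Fin m) (Fin p) RF) (hQ : MStable Q)
    (hdet : (Y + N * Q).det ≠ 0)
    (K : Matrix (Fin m) (Fin p) RF) (hK : K = (X + M * Q) * (Y + N * Q)⁻¹) :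
    ((1 : Matrix (Fin p) (Fin p) RF) - G₂₂ * K).det ≠ 0 ∧
    G₁₁ + G₁₂ * K * ((1 : Matrix (Fin p) (Fin p) RF) - G₂₂ * K)⁻¹ * G₂₁
      = (G₁₁ + G₁₂ * X * Mtil * G₂₁) + (G₁₂ * M) * Q * (Mtil * G₂₁) := by
  obtain ⟨-, -, -, -, -, -, -, -, hdM, hdMt, hG1, hG2, hbez⟩ := hDCF
  rw [← Matrix.fromBlocks_one, Matrix.fromBlocks_multiply, Matrix.fromBlocks_inj] at hbez
  obtain ⟨-, -, h21, h22⟩ := hbez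
  have hMN : Mtil * N = Ntil * M := by
    rw [Matrix.neg_mul] at h21
    linear_combination (norm := abel) h21
  have hMY : Mtil * Y - Ntil * X = 1 := by
    rw [Matrix.neg_mul] at h22
    linear_combination (norm := abel) h22
  have hkey : Mtil * (Y + N * Q) - Ntil * (X + M * Q) = 1 := by
    rw [Matrix.mul_add, Matrix.mul_add, ← Matrix.mul_assoc, ← Matrix.mul_assoc, hMN]
    linear_combination (norm := abel) hMY
  have hYNQ1 : (Y + N * Q) * (Y + N * Q)⁻¹ = 1 := Matrix.mul_nonsing_inv _ hdet.isUnit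
  have hYNQ2 : (Y + N * Q)⁻¹ * (Y + N * Q) = 1 := Matrix.nonsing_inv_mul _ hdet.isUnit
  have hMt1 : Mtil⁻¹ * Mtil = 1 := Matrix.nonsing_inv_mul _ hdMt.isUnit
  have hcl : (1 : Matrix (Fin p) (Fin p) RF) - G₂₂ * K = Mtil⁻¹ * (Y + N * Q)⁻¹ := by
    have e1 : Mtil⁻¹ * (Y + N * Q)⁻¹
        = Mtil⁻¹ * ((Mtil * (Y + N * Q) - Ntil * (X + M * Q)) * (Y + N * Q)⁻¹) := by
      rw [hkey, Matrix.one_mul]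
    rw [hK, hG2, e1, Matrix.sub_mul, Matrix.mul_sub]
    simp only [Matrix.mul_assoc, hYNQ1, Matrix.mul_one]
    rw [hMt1]
  have hdetcl : ((1 : Matrix (Fin p) (Fin p) RF) - G₂₂ * K).det ≠ 0 := by
    rw [hcl, Matrix.det_mul, Matrix.det_nonsing_inv, Matrix.det_nonsing_inv,
      Ring.inverse_eq_inv, Ring.inverse_eq_inv]
    exact mul_ne_zero (inv_ne_zero hdMt) (inv_ne_zero hdet)
  refine ⟨hdetcl, ?_⟩
  have hinv : ((1 : Matrix (Fin p) (Fin p) RF) - G₂₂ * K)⁻¹ = (Y + N * Q) * Mtil := by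
    rw [hcl, Matrix.mul_inv_rev, Matrix.nonsing_inv_nonsing_inv _ hdet.isUnit,
      Matrix.nonsing_inv_nonsing_inv _ hdMt.isUnit]
  rw [hinv, hK]
  simp only [← Matrix.mul_assoc]
  rw [Matrix.mul_assoc (G₁₂ * (X + M * Q)), hYNQ2, Matrix.mul_one]
  simp [Matrix.mul_add, Matrix.add_mul, Matrix.mul_assoc, add_assoc]

end
end

section
/- Let (N, Ñ, M, M̃, X, X̃, Y, Ỹ) be a doubly coprime factorization over RH∞ of G ∈ ℝ(s)^{p×m}, let 𝒳 ∈ {0,1}^{m×p} and let Ŷ ∈ {0,1}^{m×m} with all diagonal entries of Ŷ equal to 1. Define F_𝒳 := I_{mp} − diag(𝒳) and F_Ŷ := I_{m²} − diag(Ŷ). Suppose there exist stable Q₀, Q̂ ∈ ℝ(s)^{m×p} such that: (i) F_𝒳((M̃ᵀ ⊗ I_m)·vec(Q₀) + vec(X̃)) = 0 and F_Ŷ((Ñᵀ ⊗ I_m)·vec(Q₀) + vec(Ỹ)) = 0; (ii) F_𝒳(M̃ᵀ ⊗ I_m)·vec(Q̂) = 0 and F_Ŷ(Ñᵀ ⊗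 I_m)·vec(Q̂) = 0; and, with Q := Q₀ + Q̂, V := Ỹ + QÑ and W := X̃ + QM̃: (iii) det(V(∞)) ≠ 0; (iv) det(V^diag(∞)) ≠ 0. Then det V ≢ 0 and det(V^diag) ≢ 0, and the rational matrices Φ := I_m − (V^diag)^{−1}V and Γ := (V^diag)^{−1}W satisfy: Φ and Γ are proper, Γ ∈ Ŝ_𝒳, Φ ∈ Ŝ_{Ŷ−I} (so all diagonal entries of Φ are zero), det(I_m − Φ) ≢ 0, and (I_m − Φ)^{−1}Γ = V^{−1}W, i.e. the controller K = (Ỹ + QÑ)^{−1}(X̃ + QM̃) admits the network realization function implementation (Φ, Γ) with the prescribed sparsity. -/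
/-!
Proper rational functions form a subring of ℝ(s) on which evaluation at infinity is a ring
homomorphism to ℝ. Hence det V(∞) ≠ 0 forces det V ≠ 0, and V_ii(∞) ≠ 0 makes V_ii⁻¹ · f proper
for every proper f. Since (Aᵀ ⊗ I) vec Q = vec (Q A), the vectorized constraints say exactly that
the entries of W = X̃ + Q M̃ outside the pattern 𝒳 and the entries of V outside Ŷ vanish. Scaling
the rows of V and W by V_ii⁻¹ keeps these zeros, kills the diagonal of Φ, and
(V_d⁻¹ V)⁻¹ V_d⁻¹ W = V⁻¹ W.
-/

open Matrix Polynomial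
open scoped Kronecker

set_option synthInstance.maxHeartbeats 400000
set_option maxHeartbeats 1000000

noncomputable section

/-- Evaluation at infinity of a rational function : ratio of leading coefficients when
numerator and denominator degrees are equal, 0 otherwise (the limit, for proper f). -/
def evalInf (f : RF) : ℝ :=
  if f.num.degree = f.denom.degree then f.num.leadingCoeff / f.denom.leadingCoeff else 0

/-- Columnwise vectorization of an m × p matrix: index (j, i) holds the entry M i j,
i.e. vec(M)_{i+(j-1)m} = M_{ij}. -/
def vecM {m p : Type*} (M : Matrix m p RF) : (p × m) → RF := fun x => M x.2 x.1

open RatFunc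

lemma evalInf_zero : evalInf 0 = 0 := by
  simp [evalInf]

lemma evalInf_one : evalInf 1 = 1 := by
  simp [evalInf]

lemma RFproper_zero : RFproper 0 := by
  simp [RFproper]

lemma RFproper_one : RFproper 1 := by
  simp [RFproper]

lemma RFproper_of_num_mul_eq {x : RF} {p q : ℝ[X]} (hq : q ≠ 0) (hpq : p.degree ≤ q.degree)
    (h : x.num * q = p * x.denom) : RFproper x := by
  have hdeg := congrArg Polynomial.degree h
  rw [degree_mul, degree_mul] at hdeg
  refine WithBot.le_of_add_le_add_right (degree_ne_bot.mpr hq) ?_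
  rw [hdeg, add_comm]
  exact add_le_add_right hpq _

lemma evalInf_eq_coeff {x : RF} (hx : RFproper x) :
    evalInf x = x.num.coeff x.denom.natDegree := by
  unfold evalInf
  split_ifs with h
  · rw [(monic_denom x).leadingCoeff, div_one, ← coeff_natDegree,
      natDegree_eq_natDegree h]
  · rw [coeff_eq_zero_of_degree_lt ((lt_of_le_of_ne hx h).trans_le degree_le_natDegree)]

lemma evalInf_of_num_mul_eq {x : RF} {p q : ℝ[X]} (hq : q ≠ 0) (hpq : p.degree ≤ q.degree)
    (h : x.num * q = p * x.denom) : evalInf x = p.coeff q.natDegree / q.leadingCoeff := by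
  have hx := RFproper_of_num_mul_eq hq hpq h
  have hcoeff := congrArg (coeff · (x.denom.natDegree + q.natDegree)) h
  rw [coeff_mul_add_eq_of_natDegree_le (natDegree_le_natDegree hx) le_rfl, add_comm,
    coeff_mul_add_eq_of_natDegree_le (natDegree_le_natDegree hpq) le_rfl,
    coeff_natDegree, coeff_natDegree, (monic_denom x).leadingCoeff, mul_one] at hcoeff
  rw [evalInf_eq_coeff hx, eq_div_iff (leadingCoeff_ne_zero.mpr hq), hcoeff]

lemma degree_num_mul_denom_add_le {f g : RF} (hf : RFproper f) (hg : RFproper g) :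
    (f.num * g.denom + f.denom * g.num).degree ≤ (f.denom * g.denom).degree := by
  refine (degree_add_le _ _).trans (max_le ?_ ?_) <;> rw [degree_mul, degree_mul]
  · exact add_le_add_left hf _
  · exact add_le_add_right hg _

lemma degree_num_mul_le {f g : RF} (hf : RFproper f) (hg : RFproper g) :
    (f.num * g.num).degree ≤ (f.denom * g.denom).degree := by
  rw [degree_mul, degree_mul]
  exact add_le_add hf hg

lemma RFproper_add {f g : RF} (hf : RFproper f) (hg : RFproper g) : RFproper (f + g) :=
  RFproper_of_num_mul_eq (mul_ne_zero (denom_ne_zero f) (denom_ne_zero g))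
    (degree_num_mul_denom_add_le hf hg) (num_denom_add f g)

lemma RFproper_mul {f g : RF} (hf : RFproper f) (hg : RFproper g) : RFproper (f * g) :=
  RFproper_of_num_mul_eq (mul_ne_zero (denom_ne_zero f) (denom_ne_zero g))
    (degree_num_mul_le hf hg) (num_denom_mul f g)

lemma RFproper_neg {f : RF} (hf : RFproper f) : RFproper (-f) :=
  RFproper_of_num_mul_eq (denom_ne_zero f) (by rwa [degree_neg]) (num_denom_neg f)

lemma evalInf_add {f g : RF} (hf : RFproper f) (hg : RFproper g) :
    evalInf (f + g) = evalInf f + evalInf g := by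
  have hmonic := (monic_denom f).mul (monic_denom g)
  rw [evalInf_of_num_mul_eq hmonic.ne_zero (degree_num_mul_denom_add_le hf hg)
      (num_denom_add f g), hmonic.leadingCoeff, div_one, evalInf_eq_coeff hf,
    evalInf_eq_coeff hg, (monic_denom f).natDegree_mul (monic_denom g), coeff_add,
    coeff_mul_add_eq_of_natDegree_le (natDegree_le_natDegree hf) le_rfl,
    coeff_mul_add_eq_of_natDegree_le le_rfl (natDegree_le_natDegree hg),
    coeff_natDegree, coeff_natDegree, (monic_denom f).leadingCoeff,
    (monic_denom g).leadingCoeff, mul_one, one_mul]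

lemma evalInf_mul {f g : RF} (hf : RFproper f) (hg : RFproper g) :
    evalInf (f * g) = evalInf f * evalInf g := by
  have hmonic := (monic_denom f).mul (monic_denom g)
  rw [evalInf_of_num_mul_eq hmonic.ne_zero (degree_num_mul_le hf hg) (num_denom_mul f g),
    hmonic.leadingCoeff, div_one, evalInf_eq_coeff hf, evalInf_eq_coeff hg,
    (monic_denom f).natDegree_mul (monic_denom g),
    coeff_mul_add_eq_of_natDegree_le (natDegree_le_natDegree hf) (natDegree_le_natDegree hg)]

def properSubring : Subring RF where
  carrier := {f | RFproper f}
  one_mem' := RFproper_one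
  zero_mem' := RFproper_zero
  add_mem' := RFproper_add
  mul_mem' := RFproper_mul
  neg_mem' := RFproper_neg

def evalInfHom : properSubring →+* ℝ where
  toFun f := evalInf f
  map_one' := evalInf_one
  map_zero' := evalInf_zero
  map_add' f g := evalInf_add f.2 g.2
  map_mul' f g := evalInf_mul f.2 g.2

lemma det_ne_zero_of_det_map_evalInf_ne_zero {n : Type*} [Fintype n] [DecidableEq n]
    {A : Matrix n n RF} (hA : ∀ i j, RFproper (A i j)) (h : (A.map evalInf).det ≠ 0) :
    A.det ≠ 0 := by
  let A' : Matrix n n properSubring := fun i j => ⟨A i j, hA i j⟩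
  have hdet : A.det = A'.det := (properSubring.subtype.map_det A').symm
  have hdetInf : (A.map evalInf).det = evalInfHom A'.det := (evalInfHom.map_det A').symm
  rw [hdet, Ne, Subring.coe_eq_zero_iff]
  exact fun h0 => h (by rw [hdetInf, h0, map_zero])

lemma RFproper_inv_mul {f g : RF} (hg : RFproper g) (hf : evalInf f ≠ 0) :
    RFproper (f⁻¹ * g) := by
  have hf0 : f ≠ 0 := by rintro rfl; exact hf evalInf_zero
  have hdeg : f.num.degree = f.denom.degree := by
    by_contra hne
    exact hf (if_neg hne)
  refine RFproper_of_num_mul_eq (p := f.denom * g.num) (q := f.num * g.denom)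
    (mul_ne_zero (num_ne_zero hf0) (denom_ne_zero g)) ?_ ?_
  · rw [degree_mul, degree_mul, hdeg]
    exact add_le_add_right hg _
  · rw [num_mul_eq_mul_denom_iff (mul_ne_zero (num_ne_zero hf0) (denom_ne_zero g))]
    conv_lhs => rw [← num_div_denom f, ← num_div_denom g]
    rw [inv_div, div_mul_div_comm, ← map_mul, ← map_mul]

lemma RFproper_add_mul_apply {l n o : Type*} [Fintype n] {A : Matrix l o RF}
    {B : Matrix l n RF} {C : Matrix n o RF} (hA : ∀ i j, RFproper (A i j))
    (hB : ∀ i j, RFproper (B i j)) (hC : ∀ i j, RFproper (C i j)) (i : l) (j : o) :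
    RFproper ((A + B * C) i j) :=
  add_mem (hA i j) (sum_mem fun k _ => mul_mem (s := properSubring) (hB i k) (hC k j))

lemma kroneckerMap_transpose_one_mulVec_vecM {a b c : Type*} [Fintype a] [Fintype c]
    [DecidableEq c] (A : Matrix a b RF) (R : Matrix c a RF) :
    (Aᵀ ⊗ₖ (1 : Matrix c c RF)) *ᵥ vecM R = vecM (R * A) := by
  ext ⟨j, i⟩
  simp only [mulVec, dotProduct, Fintype.sum_prod_type, kroneckerMap_apply, vecM, one_apply,
    transpose_apply, mul_apply, mul_ite, mul_one, mul_zero, ite_mul, zero_mul]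
  rw [Finset.sum_comm]
  simp [mul_comm]

lemma apply_eq_zero_of_one_sub_diagonal_mulVec_eq_zero {ι R : Type*} [Fintype ι]
    [DecidableEq ι] [Ring R] {d v : ι → R} (h : (1 - diagonal d) *ᵥ v = 0) {x : ι}
    (hd : d x = 0) : v x = 0 := by
  simpa [sub_mulVec, mulVec_diagonal, hd] using congrFun h x

lemma add_mul_apply_eq_zero_of_vec_constraints {a b c : Type*} [Fintype a] [Fintype b]
    [Fintype c] [DecidableEq b] [DecidableEq c] {A : Matrix a b RF} {B : Matrix c b RF}
    {Q₀ Q₁ : Matrix c a RF} {d : b × c → RF}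
    (h₀ : (1 - diagonal d) *ᵥ ((Aᵀ ⊗ₖ (1 : Matrix c c RF)) *ᵥ vecM Q₀ + vecM B) = 0)
    (h₁ : (1 - diagonal d) *ᵥ ((Aᵀ ⊗ₖ (1 : Matrix c c RF)) *ᵥ vecM Q₁) = 0)
    {i : c} {j : b} (hd : d (j, i) = 0) : (B + (Q₀ + Q₁) * A) i j = 0 := by
  rw [kroneckerMap_transpose_one_mulVec_vecM] at h₀ h₁
  have e₀ := apply_eq_zero_of_one_sub_diagonal_mulVec_eq_zero h₀ hd
  have e₁ := apply_eq_zero_of_one_sub_diagonal_mulVec_eq_zero h₁ hd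
  simp only [Pi.add_apply, vecM] at e₀ e₁
  rw [Matrix.add_mul, Matrix.add_apply, Matrix.add_apply]
  linear_combination e₀ + e₁

lemma nonsing_inv_mul_inv_mul_cancel {n o K : Type*} [Fintype n] [DecidableEq n] [CommRing K]
    {D : Matrix n n K} (hD : IsUnit D.det) (V : Matrix n n K) (W : Matrix n o K) :
    (D⁻¹ * V)⁻¹ * (D⁻¹ * W) = V⁻¹ * W := by
  rw [Matrix.mul_inv_rev, nonsing_inv_nonsing_inv D hD, Matrix.mul_assoc, ← Matrix.mul_assoc D,
    mul_nonsing_inv D hD, Matrix.one_mul]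

lemma evalInf_ne_zero_of_det_map_diagonal_ne_zero {n : Type*} [Fintype n] [DecidableEq n]
    {v : n → RF} (h : ((diagonal v).map evalInf).det ≠ 0) (i : n) : evalInf (v i) ≠ 0 := by
  rw [diagonal_map evalInf_zero, det_diagonal] at h
  exact Finset.prod_ne_zero_iff.mp h i (Finset.mem_univ i)

section DiagonalScaling

variable {n o K : Type*} [Fintype n] [DecidableEq n] [Field K] {V : Matrix n n K}

lemma inv_diagonal_diag (hV : ∀ i, V i i ≠ 0) :
    (diagonal V.diag)⁻¹ = diagonal fun i => (V i i)⁻¹ :=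
  inv_eq_right_inv <| by
    rw [diagonal_mul_diagonal, ← diagonal_one]
    exact congrArg diagonal (funext fun i => mul_inv_cancel₀ (hV i))

lemma det_diagonal_diag_ne_zero (hV : ∀ i, V i i ≠ 0) : (diagonal V.diag).det ≠ 0 := by
  rw [det_diagonal]
  exact Finset.prod_ne_zero_iff.mpr fun i _ => hV i

lemma inv_diagonal_diag_mul_apply (hV : ∀ i, V i i ≠ 0) (W : Matrix n o K) (i : n) (j : o) :
    ((diagonal V.diag)⁻¹ * W) i j = (V i i)⁻¹ * W i j := by
  rw [inv_diagonal_diag hV, diagonal_mul]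

lemma one_sub_inv_diagonal_diag_mul_apply_self (hV : ∀ i, V i i ≠ 0) (i : n) :
    (1 - (diagonal V.diag)⁻¹ * V) i i = 0 := by
  rw [Matrix.sub_apply, inv_diagonal_diag_mul_apply hV, one_apply_eq, inv_mul_cancel₀ (hV i),
    sub_self]

lemma one_sub_inv_diagonal_diag_mul_apply_of_ne (hV : ∀ i, V i i ≠ 0) {i j : n} (hij : i ≠ j) :
    (1 - (diagonal V.diag)⁻¹ * V) i j = -((V i i)⁻¹ * V i j) := by
  rw [Matrix.sub_apply, inv_diagonal_diag_mul_apply hV, one_apply_ne hij, zero_sub]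

end DiagonalScaling

theorem stmt_4_general {p m : ℕ} (G : Matrix (Fin p) (Fin m) RF)
    (N Ntil : Matrix (Fin p) (Fin m) RF) (M Ytil : Matrix (Fin m) (Fin m) RF)
    (Mtil Y : Matrix (Fin p) (Fin p) RF) (X Xtil : Matrix (Fin m) (Fin p) RF)
    (hDCF : IsDCF G N Ntil M Mtil X Xtil Y Ytil)
    -- binary structure matrices
    (𝒳 : Matrix (Fin m) (Fin p) ℝ)
    (Yhat : Matrix (Fin m) (Fin m) ℝ)
    -- the sparsity selection matrices F_𝒳 = I - diag(𝒳), F_Ŷ = I - diag(Ŷ)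
    (F𝒳 : Matrix (Fin p × Fin m) (Fin p × Fin m) RF)
    (hF𝒳 : F𝒳 = 1 - Matrix.diagonal (fun x : Fin p × Fin m => algebraMap ℝ RF (𝒳 x.2 x.1)))
    (FY : Matrix (Fin m × Fin m) (Fin m × Fin m) RF)
    (hFY : FY = 1 - Matrix.diagonal (fun x : Fin m × Fin m => algebraMap ℝ RF (Yhat x.2 x.1)))
    (Q₀ Qhat : Matrix (Fin m) (Fin p) RF) (hQ₀ : MStable Q₀) (hQhat : MStable Qhat)
    -- (i) F_𝒳((M̃ᵀ ⊗ I)vec(Q₀) + vec(X̃)) = 0 and F_Ŷ((Ñᵀ ⊗ I)vec(Q₀) + vec(Ỹ)) = 0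
    (hi₁ : F𝒳.mulVec ((Mtilᵀ ⊗ₖ (1 : Matrix (Fin m) (Fin m) RF)).mulVec (vecM Q₀)
            + vecM Xtil) = 0)
    (hi₂ : FY.mulVec ((Ntilᵀ ⊗ₖ (1 : Matrix (Fin m) (Fin m) RF)).mulVec (vecM Q₀)
            + vecM Ytil) = 0)
    -- (ii) F_𝒳(M̃ᵀ ⊗ I)vec(Q̂) = 0 and F_Ŷ(Ñᵀ ⊗ I)vec(Q̂) = 0
    (hii₁ : F𝒳.mulVec ((Mtilᵀ ⊗ₖ (1 : Matrix (Fin m) (Fin m) RF)).mulVec (vecM Qhat)) = 0)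
    (hii₂ : FY.mulVec ((Ntilᵀ ⊗ₖ (1 : Matrix (Fin m) (Fin m) RF)).mulVec (vecM Qhat)) = 0)
    -- Q, V, W and the diagonal part of V
    (Q : Matrix (Fin m) (Fin p) RF) (hQ : Q = Q₀ + Qhat)
    (V : Matrix (Fin m) (Fin m) RF) (hV : V = Ytil + Q * Ntil)
    (W : Matrix (Fin m) (Fin p) RF) (hW : W = Xtil + Q * Mtil)
    (Vd : Matrix (Fin m) (Fin m) RF) (hVd : Vd = Matrix.diagonal V.diag)
    -- (iii) det V(∞) ≠ 0 and (iv) det V^diag(∞) ≠ 0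
    (hiii : (V.map evalInf).det ≠ 0)
    (hiv : (Vd.map evalInf).det ≠ 0)
    -- the NRF pair
    (Φ : Matrix (Fin m) (Fin m) RF) (hΦ : Φ = 1 - Vd⁻¹ * V)
    (Γ : Matrix (Fin m) (Fin p) RF) (hΓ : Γ = Vd⁻¹ * W) :
    V.det ≠ 0 ∧ Vd.det ≠ 0 ∧
    (∀ i j, RFproper (Φ i j)) ∧ (∀ i j, RFproper (Γ i j)) ∧
    (∀ i j, 𝒳 i j = 0 → Γ i j = 0) ∧
    (∀ i j, Yhat i j - (1 : Matrix (Fin m) (Fin m) ℝ) i j = 0 → Φ i j = 0) ∧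
    ((1 : Matrix (Fin m) (Fin m) RF) - Φ).det ≠ 0 ∧
    ((1 : Matrix (Fin m) (Fin m) RF) - Φ)⁻¹ * Γ = V⁻¹ * W := by
  obtain ⟨-, hNtil, -, hMtil, -, hXtil, -, hYtil, -⟩ := hDCF
  subst hF𝒳 hFY hQ hVd hΦ hΓ
  have hQp i j : RFproper ((Q₀ + Qhat) i j) := RFproper_add (hQ₀ i j).1 (hQhat i j).1
  have hVp : ∀ i j, RFproper (V i j) :=
    hV ▸ RFproper_add_mul_apply (fun i j => (hYtil i j).1) hQp fun i j => (hNtil i j).1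
  have hWp : ∀ i j, RFproper (W i j) :=
    hW ▸ RFproper_add_mul_apply (fun i j => (hXtil i j).1) hQp fun i j => (hMtil i j).1
  have hVinf := evalInf_ne_zero_of_det_map_diagonal_ne_zero hiv
  have hVii i : V i i ≠ 0 := fun h => hVinf i (by rw [diag_apply, h, evalInf_zero])
  have hVdet := det_ne_zero_of_det_map_evalInf_ne_zero hVp hiii
  have hVddet := det_diagonal_diag_ne_zero hVii
  rw [sub_sub_cancel]
  refine ⟨hVdet, hVddet, fun i j => ?_, fun i j => ?_, fun i j h => ?_, fun i j h => ?_,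
    ?_, nonsing_inv_mul_inv_mul_cancel hVddet.isUnit V W⟩
  · rcases eq_or_ne i j with rfl | hij
    · exact one_sub_inv_diagonal_diag_mul_apply_self hVii i ▸ RFproper_zero
    · exact one_sub_inv_diagonal_diag_mul_apply_of_ne hVii hij ▸
        RFproper_neg (RFproper_inv_mul (hVp i j) (hVinf i))
  · exact inv_diagonal_diag_mul_apply hVii W i j ▸ RFproper_inv_mul (hWp i j) (hVinf i)
  · rw [inv_diagonal_diag_mul_apply hVii, hW,
      add_mul_apply_eq_zero_of_vec_constraints hi₁ hii₁ (by simp [h]), mul_zero]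
  · rcases eq_or_ne i j with rfl | hij
    · exact one_sub_inv_diagonal_diag_mul_apply_self hVii i
    · rw [one_apply_ne hij, sub_zero] at h
      have hVij : V i j = 0 := by
        rw [hV]
        exact add_mul_apply_eq_zero_of_vec_constraints hi₂ hii₂ (by simp [h])
      rw [one_sub_inv_diagonal_diag_mul_apply_of_ne hVii hij, hVij, mul_zero, neg_zero]
  · rw [det_mul, det_nonsing_inv, Ring.inverse_eq_inv]
    exact mul_ne_zero (inv_ne_zero hVddet) hVdet

/-- sparsity of the NRF pair (Φ, Γ) from vectorized model-matching
conditions on the Youla parameter. -/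
theorem stmt_4 {p m : ℕ} (G : Matrix (Fin p) (Fin m) RF)
    (N Ntil : Matrix (Fin p) (Fin m) RF) (M Ytil : Matrix (Fin m) (Fin m) RF)
    (Mtil Y : Matrix (Fin p) (Fin p) RF) (X Xtil : Matrix (Fin m) (Fin p) RF)
    (hDCF : IsDCF G N Ntil M Mtil X Xtil Y Ytil)
    -- binary structure matrices
    (𝒳 : Matrix (Fin m) (Fin p) ℝ) (h𝒳 : ∀ i j, 𝒳 i j = 0 ∨ 𝒳 i j = 1)
    (Yhat : Matrix (Fin m) (Fin m) ℝ) (hYhat : ∀ i j, Yhat i j = 0 ∨ Yhat i j = 1)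
    (hYdiag : ∀ i, Yhat i i = 1)
    -- the sparsity selection matrices F_𝒳 = I - diag(𝒳), F_Ŷ = I - diag(Ŷ)
    (F𝒳 : Matrix (Fin p × Fin m) (Fin p × Fin m) RF)
    (hF𝒳 : F𝒳 = 1 - Matrix.diagonal (fun x : Fin p × Fin m => algebraMap ℝ RF (𝒳 x.2 x.1)))
    (FY : Matrix (Fin m × Fin m) (Fin m × Fin m) RF)
    (hFY : FY = 1 - Matrix.diagonal (fun x : Fin m × Fin m => algebraMap ℝ RF (Yhat x.2 x.1)))
    (Q₀ Qhat : Matrix (Fin m) (Fin p) RF) (hQ₀ : MStable Q₀) (hQhat : MStable Qhat)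
    -- (i) F_𝒳((M̃ᵀ ⊗ I)vec(Q₀) + vec(X̃)) = 0 and F_Ŷ((Ñᵀ ⊗ I)vec(Q₀) + vec(Ỹ)) = 0
    (hi₁ : F𝒳.mulVec ((Mtilᵀ ⊗ₖ (1 : Matrix (Fin m) (Fin m) RF)).mulVec (vecM Q₀)
            + vecM Xtil) = 0)
    (hi₂ : FY.mulVec ((Ntilᵀ ⊗ₖ (1 : Matrix (Fin m) (Fin m) RF)).mulVec (vecM Q₀)
            + vecM Ytil) = 0)
    -- (ii) F_𝒳(M̃ᵀ ⊗ I)vec(Q̂) = 0 and F_Ŷ(Ñᵀ ⊗ I)vec(Q̂) = 0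
    (hii₁ : F𝒳.mulVec ((Mtilᵀ ⊗ₖ (1 : Matrix (Fin m) (Fin m) RF)).mulVec (vecM Qhat)) = 0)
    (hii₂ : FY.mulVec ((Ntilᵀ ⊗ₖ (1 : Matrix (Fin m) (Fin m) RF)).mulVec (vecM Qhat)) = 0)
    -- Q, V, W and the diagonal part of V
    (Q : Matrix (Fin m) (Fin p) RF) (hQ : Q = Q₀ + Qhat)
    (V : Matrix (Fin m) (Fin m) RF) (hV : V = Ytil + Q * Ntil)
    (W : Matrix (Fin m) (Fin p) RF) (hW : W = Xtil + Q * Mtil)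
    (Vd : Matrix (Fin m) (Fin m) RF) (hVd : Vd = Matrix.diagonal V.diag)
    -- (iii) det V(∞) ≠ 0 and (iv) det V^diag(∞) ≠ 0
    (hiii : (V.map evalInf).det ≠ 0)
    (hiv : (Vd.map evalInf).det ≠ 0)
    -- the NRF pair
    (Φ : Matrix (Fin m) (Fin m) RF) (hΦ : Φ = 1 - Vd⁻¹ * V)
    (Γ : Matrix (Fin m) (Fin p) RF) (hΓ : Γ = Vd⁻¹ * W) :
    V.det ≠ 0 ∧ Vd.det ≠ 0 ∧
    (∀ i j, RFproper (Φ i j)) ∧ (∀ i j, RFproper (Γ i j)) ∧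
    (∀ i j, 𝒳 i j = 0 → Γ i j = 0) ∧
    (∀ i j, Yhat i j - (1 : Matrix (Fin m) (Fin m) ℝ) i j = 0 → Φ i j = 0) ∧
    ((1 : Matrix (Fin m) (Fin m) RF) - Φ).det ≠ 0 ∧
    ((1 : Matrix (Fin m) (Fin m) RF) - Φ)⁻¹ * Γ = V⁻¹ * W :=
  stmt_4_general G N Ntil M Ytil Mtil Y X Xtil hDCF 𝒳 Yhat F𝒳 hF𝒳 FY hFY Q₀ Qhat hQ₀ hQhat hi₁ hi₂
    hii₁ hii₂ Q hQ V hV W hW Vd hVd hiii hiv Φ hΦ Γ hΓ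

end
end
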